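/- Let A be a Noetherian local ring with maximal ideal m and M, N finitely generated A-modules. If the m-adic completions M̂ and N̂ are isomorphic as Â-modules, then M ≅ N. -/

import Mathlib

/-!
By flatness, `Hom_B(B ⊗ M, B ⊗ N) = B ⊗ Hom_A(M, N)` for `M` finitely presented. When
`A → B → B ⧸ 𝔪_B` is surjective, every element of this base change is congruent modulo `𝔪_B`
to some `f.baseChange B`. So an isomorphism `B ⊗ M ≅ B ⊗ N` is, modulo `𝔪_B`, the base change
of some `f : M → N`, which is then surjective after base change by Nakayama, hence surjective
by faithful flatness. Doing the same for the inverse gives a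
surjection `N → M`, and a surjective endomorphism of a finite module is injective.
For the completion of a Noetherian local ring `A` all of this applies with `B = Â`.
-/

open TensorProduct IsLocalRing

section LocalAlgebra

variable {A B : Type*} [CommRing A] [CommRing B] [Algebra A B] [IsLocalRing B]

theorem exists_algebraMap_sub_mem_maximalIdeal
    (hres : Function.Surjective ((residue B).comp (algebraMap A B))) (b : B) :
    ∃ a : A, b - algebraMap A B a ∈ maximalIdeal B := by
  obtain ⟨a, ha⟩ := hres (residue B b)
  exact ⟨a, by rw [← residue_eq_zero_iff, map_sub, ← RingHom.comp_apply, ha, sub_self]⟩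

theorem IsBaseChange.exists_eq_add_mem_maximalIdeal_smul_top
    (hres : Function.Surjective ((residue B).comp (algebraMap A B)))
    {H H' : Type*} [AddCommMonoid H] [Module A H] [AddCommMonoid H'] [Module A H'] [Module B H']
    [IsScalarTower A B H'] {j : H →ₗ[A] H'} (hj : IsBaseChange B j) (x : H') :
    ∃ h, ∃ ρ ∈ maximalIdeal B • (⊤ : Submodule B H'), x = j h + ρ := by
  refine hj.inductionOn x _ ⟨0, 0, zero_mem _, by simp⟩ (fun h ↦ ⟨h, 0, zero_mem _, by simp⟩)
    ?_ ?_
  · rintro s _ ⟨h, ρ, hρ, rfl⟩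
    obtain ⟨a, ha⟩ := exists_algebraMap_sub_mem_maximalIdeal hres s
    refine ⟨a • h, (s - algebraMap A B a) • j h + s • ρ,
      add_mem (Submodule.smul_mem_smul ha trivial) (Submodule.smul_mem _ s hρ), ?_⟩
    conv_lhs => rw [← add_sub_cancel (algebraMap A B a) s]
    rw [map_smul, ← algebraMap_smul B a (j h), smul_add, add_smul, add_assoc, add_sub_cancel]
  · rintro _ _ ⟨h, ρ, hρ, rfl⟩ ⟨h', ρ', hρ', rfl⟩
    exact ⟨h + h', ρ + ρ', add_mem hρ hρ', by rw [map_add]; abel⟩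

end LocalAlgebra

section FaithfullyFlat

variable {A B : Type*} [CommRing A] [CommRing B] [Algebra A B] [IsLocalRing B]
  [Module.FaithfullyFlat A B]
variable {M N : Type*} [AddCommGroup M] [Module A M] [AddCommGroup N] [Module A N]

theorem exists_surjective_of_baseChange_surjective
    (hres : Function.Surjective ((residue B).comp (algebraMap A B)))
    [Module.FinitePresentation A M] [Module.Finite A N]
    {g : B ⊗[A] M →ₗ[B] B ⊗[A] N} (hg : Function.Surjective g) :
    ∃ f : M →ₗ[A] N, Function.Surjective f := by
  have hbc : IsBaseChange B (LinearMap.baseChangeHom A B M N) :=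
    Module.FinitePresentation.isBaseChange_map A M N B
  obtain ⟨f, ρ, hρ, rfl⟩ := hbc.exists_eq_add_mem_maximalIdeal_smul_top hres g
  refine ⟨f, ?_⟩
  have hmod : ⊤ ≤ LinearMap.range (f.baseChange B) ⊔ maximalIdeal B • ⊤ := by
    intro y _
    obtain ⟨z, rfl⟩ := hg y
    exact Submodule.add_mem_sup ⟨z, rfl⟩
      (Submodule.smul_top_le_comap_smul_top (maximalIdeal B) (LinearMap.applyₗ z) hρ)
  have hfB : Function.Surjective (f.baseChange B) :=
    LinearMap.range_eq_top.mp <| top_le_iff.mp <| Submodule.le_of_le_smul_of_le_jacobson_bot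
      Module.Finite.fg_top (maximalIdeal_le_jacobson ⊥) hmod
  rwa [LinearMap.baseChange_eq_ltensor,
    Module.FaithfullyFlat.lTensor_surjective_iff_surjective] at hfB

theorem nonempty_linearEquiv_of_baseChange
    (hres : Function.Surjective ((residue B).comp (algebraMap A B)))
    [Module.FinitePresentation A M] [Module.FinitePresentation A N]
    (e : B ⊗[A] M ≃ₗ[B] B ⊗[A] N) : Nonempty (M ≃ₗ[A] N) := by
  obtain ⟨f, hf⟩ :=
    exists_surjective_of_baseChange_surjective hres (g := e.toLinearMap) e.surjective
  obtain ⟨g, hg⟩ :=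
    exists_surjective_of_baseChange_surjective hres (g := e.symm.toLinearMap) e.symm.surjective
  have hgf : Function.Injective (g ∘ₗ f) :=
    OrzechProperty.injective_of_surjective_endomorphism _ (hg.comp hf)
  exact ⟨LinearEquiv.ofBijective f ⟨Function.Injective.of_comp (f := g) hgf, hf⟩⟩

end FaithfullyFlat

theorem AdicCompletion.residue_comp_algebraMap_surjective (A : Type*) [CommRing A]
    [IsNoetherianRing A] [IsLocalRing A] :
    Function.Surjective ((residue (AdicCompletion (maximalIdeal A) A)).comp
      (algebraMap A (AdicCompletion (maximalIdeal A) A))) := by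
  rw [← ResidueField.map_comp_residue]
  exact (residueField_map_bijective A).2.comp residue_surjective

/-- Let `A` be a Noetherian local ring with maximal ideal `m`, and `M`, `N` finitely
generated `A`-modules.  If the `m`-adic completions of `M` and `N` are isomorphic as
modules over the completion of `A`, then `M ≅ N`. -/
theorem stmt_17 (A : Type) [CommRing A] [IsNoetherianRing A] [IsLocalRing A]
    (M N : Type) [AddCommGroup M] [Module A M] [Module.Finite A M]
    [AddCommGroup N] [Module A N] [Module.Finite A N]
    (h : Nonempty
      (AdicCompletion (IsLocalRing.maximalIdeal A) M
        ≃ₗ[AdicCompletion (IsLocalRing.maximalIdeal A) A]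
       AdicCompletion (IsLocalRing.maximalIdeal A) N)) :
    Nonempty (M ≃ₗ[A] N) := by
  obtain ⟨e⟩ := h
  have := Module.FaithfullyFlat.of_flat_of_isLocalHom (A := A)
    (B := AdicCompletion (maximalIdeal A) A)
  have := Module.finitePresentation_of_finite A M
  have := Module.finitePresentation_of_finite A N
  exact nonempty_linearEquiv_of_baseChange (AdicCompletion.residue_comp_algebraMap_surjective A)
    ((AdicCompletion.ofTensorProductEquivOfFiniteNoetherian _ M).trans
      (e.trans (AdicCompletion.ofTensorProductEquivOfFiniteNoetherian _ N).symm))
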